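/- Let A = M − N be a splitting of A ∈ ℝ^{n×n} where M is invertible, let b ∈ ℝⁿ, θ ∈ [0,1), and let Ω ∈ ℝ^{n×n} be such that Ω + M is invertible. Suppose x* satisfies the absolute value equation Ax* − |x*| − b = 0 and ‖M^{-1}‖ < 1/[θ(‖Ω+M‖ + ‖Ω+N‖ + 1) + ‖Ω+N‖ + ‖Ω‖ + 1]. Then any sequence {x^k} in ℝⁿ satisfying ‖(Ω+M)x^{k+1} − [(Ω+N)x^k + |x^k| + b]‖ ≤ θ‖Ax^k − |x^k| − b‖ for all k ≥ 0 converges linearly to x* from any starting point x^0. -/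

import Mathlib

open Matrix Filter

/-- Componentwise absolute value of a vector in Euclidean space. -/
noncomputable def vabs {n : ℕ} (x : EuclideanSpace ℝ (Fin n)) : EuclideanSpace ℝ (Fin n) :=
  WithLp.toLp 2 (fun i => |x i|)

/-- A matrix acting on Euclidean space (so that vector norms are the Euclidean 2-norm). -/
noncomputable def mulV {n : ℕ} (M : Matrix (Fin n) (Fin n) ℝ) (x : EuclideanSpace ℝ (Fin n)) :
    EuclideanSpace ℝ (Fin n) :=
  Matrix.toEuclideanCLM (𝕜 := ℝ) M x

/-- Spectral norm of a real matrix: the operator norm induced by the Euclidean vector norm. -/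
noncomputable def spec {n : ℕ} (M : Matrix (Fin n) (Fin n) ℝ) : ℝ :=
  ‖Matrix.toEuclideanCLM (𝕜 := ℝ) M‖

/-- The GAVE residual function `F(x) = A x − B |x| − b`. -/
noncomputable def gaveF {n : ℕ} (A B : Matrix (Fin n) (Fin n) ℝ)
    (b : EuclideanSpace ℝ (Fin n)) (x : EuclideanSpace ℝ (Fin n)) : EuclideanSpace ℝ (Fin n) :=
  mulV A x - mulV B (vabs x) - b

/-- The AVE residual function `A x − |x| − b` (the GAVE with `B = I`). -/
noncomputable def aveF {n : ℕ} (A : Matrix (Fin n) (Fin n) ℝ)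
    (b : EuclideanSpace ℝ (Fin n)) (x : EuclideanSpace ℝ (Fin n)) : EuclideanSpace ℝ (Fin n) :=
  mulV A x - vabs x - b

/-- A sequence converges linearly to `xs`: the distances to `xs` contract by a fixed
factor `c < 1` at every step, and the sequence tends to `xs`. -/
def ConvergesLinearlyTo {n : ℕ} (x : ℕ → EuclideanSpace ℝ (Fin n))
    (xs : EuclideanSpace ℝ (Fin n)) : Prop :=
  (∃ c : ℝ, 0 ≤ c ∧ c < 1 ∧ ∀ k : ℕ, ‖x (k + 1) - xs‖ ≤ c * ‖x k - xs‖) ∧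
    Tendsto x atTop (nhds xs)


/-! With `e k = x k - xs`, the fixed-point identity `(Ω + M) xs = (Ω + N) xs + |xs| + b` and the
fact that `|·|` is 1-Lipschitz give `‖(Ω + M) e (k+1)‖ ≤ α ‖e k‖` with
`α = θ (‖Ω + M‖ + ‖Ω + N‖ + 1) + ‖Ω + N‖ + 1`. Writing `M e = (Ω + M) e - Ω e` then gives
`‖e (k+1)‖ ≤ ‖M⁻¹‖ (α ‖e k‖ + ‖Ω‖ ‖e (k+1)‖)`, and the hypothesis `‖M⁻¹‖ (α + ‖Ω‖) < 1` makes
`‖M⁻¹‖ α / (1 - ‖M⁻¹‖ ‖Ω‖)` a contraction factor. -/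

lemma tendsto_of_norm_sub_le_mul {E : Type*} [SeminormedAddCommGroup E] {x : ℕ → E} {xs : E}
    {c : ℝ} (hc0 : 0 ≤ c) (hc1 : c < 1)
    (hx : ∀ k, ‖x (k + 1) - xs‖ ≤ c * ‖x k - xs‖) : Tendsto x atTop (nhds xs) := by
  have hgeom : ∀ k, ‖x k - xs‖ ≤ c ^ k * ‖x 0 - xs‖ := fun k =>
    le_geom (u := fun k => ‖x k - xs‖) hc0 k fun j _ => hx j
  have hlim : Tendsto (fun k => c ^ k * ‖x 0 - xs‖) atTop (nhds 0) := by
    simpa using (tendsto_pow_atTop_nhds_zero_of_lt_one hc0 hc1).mul_const ‖x 0 - xs‖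
  exact tendsto_iff_norm_sub_tendsto_zero.mpr (squeeze_zero (fun _ => norm_nonneg _) hgeom hlim)

lemma ConvergesLinearlyTo.of_norm_sub_le_mul {n : ℕ} {x : ℕ → EuclideanSpace ℝ (Fin n)}
    {xs : EuclideanSpace ℝ (Fin n)} {c : ℝ} (hc0 : 0 ≤ c) (hc1 : c < 1)
    (hx : ∀ k, ‖x (k + 1) - xs‖ ≤ c * ‖x k - xs‖) : ConvergesLinearlyTo x xs :=
  ⟨⟨c, hc0, hc1, hx⟩, tendsto_of_norm_sub_le_mul hc0 hc1 hx⟩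

lemma le_div_mul_of_le_mul_add {m a s u v : ℝ} (hms : m * s < 1)
    (h : u ≤ m * (a * v + s * u)) : u ≤ m * a / (1 - m * s) * v := by
  rw [div_mul_eq_mul_div, le_div_iff₀ (by linarith)]
  linarith

lemma mul_div_one_sub_mul_mem_Ico {m a s : ℝ} (hm : 0 ≤ m) (ha : 0 ≤ a) (h : m * (a + s) < 1) :
    m * a / (1 - m * s) ∈ Set.Ico 0 1 := by
  have hms : 0 < 1 - m * s := by nlinarith
  exact ⟨by positivity, by rw [div_lt_one hms]; linarith⟩

section Euclidean

variable {n : ℕ}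

@[simp]
lemma mulV_add_left (P Q : Matrix (Fin n) (Fin n) ℝ) (x : EuclideanSpace ℝ (Fin n)) :
    mulV (P + Q) x = mulV P x + mulV Q x := by
  simp [mulV]

@[simp]
lemma mulV_sub_left (P Q : Matrix (Fin n) (Fin n) ℝ) (x : EuclideanSpace ℝ (Fin n)) :
    mulV (P - Q) x = mulV P x - mulV Q x := by
  simp [mulV]

@[simp]
lemma mulV_sub_right (P : Matrix (Fin n) (Fin n) ℝ) (x y : EuclideanSpace ℝ (Fin n)) :
    mulV P (x - y) = mulV P x - mulV P y :=
  map_sub _ x y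

lemma norm_mulV_le (P : Matrix (Fin n) (Fin n) ℝ) (x : EuclideanSpace ℝ (Fin n)) :
    ‖mulV P x‖ ≤ spec P * ‖x‖ :=
  ContinuousLinearMap.le_opNorm _ _

lemma spec_nonneg (P : Matrix (Fin n) (Fin n) ℝ) : 0 ≤ spec P :=
  norm_nonneg _

lemma spec_sub_le (P Q : Matrix (Fin n) (Fin n) ℝ) : spec (P - Q) ≤ spec P + spec Q := by
  simpa [spec] using
    norm_sub_le (Matrix.toEuclideanCLM (𝕜 := ℝ) P) (Matrix.toEuclideanCLM (𝕜 := ℝ) Q)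

lemma mulV_nonsing_inv_mulV {M : Matrix (Fin n) (Fin n) ℝ} (hM : IsUnit M)
    (v : EuclideanSpace ℝ (Fin n)) : mulV M⁻¹ (mulV M v) = v := by
  have hinv : M⁻¹ * M = 1 := nonsing_inv_mul M ((isUnit_iff_isUnit_det M).1 hM)
  calc mulV M⁻¹ (mulV M v) = mulV (M⁻¹ * M) v := by simp [mulV]
    _ = v := by simp [hinv, mulV]

lemma norm_vabs_sub_vabs_le (x y : EuclideanSpace ℝ (Fin n)) :
    ‖vabs x - vabs y‖ ≤ ‖x - y‖ := by
  rw [EuclideanSpace.norm_eq, EuclideanSpace.norm_eq]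
  gcongr with i
  exact abs_abs_sub_abs_le_abs_sub (x i) (y i)

end Euclidean

section AbsoluteValueEquation

variable {n : ℕ} {A M N Ω : Matrix (Fin n) (Fin n) ℝ} {b xs : EuclideanSpace ℝ (Fin n)}

lemma norm_aveF_le (hxs : aveF A b xs = 0) (y : EuclideanSpace ℝ (Fin n)) :
    ‖aveF A b y‖ ≤ (spec A + 1) * ‖y - xs‖ := by
  have hdiff : aveF A b y = mulV A (y - xs) - (vabs y - vabs xs) := by
    rw [← sub_zero (aveF A b y), ← hxs, aveF, aveF, mulV_sub_right]
    abel
  calc ‖aveF A b y‖ ≤ ‖mulV A (y - xs)‖ + ‖vabs y - vabs xs‖ := hdiff ▸ norm_sub_le _ _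
    _ ≤ spec A * ‖y - xs‖ + ‖y - xs‖ := add_le_add (norm_mulV_le _ _) (norm_vabs_sub_vabs_le _ _)
    _ = (spec A + 1) * ‖y - xs‖ := by ring

lemma mulV_add_eq_of_aveF_eq_zero (hA : A = M - N) (hxs : aveF A b xs = 0) :
    mulV (Ω + M) xs = mulV (Ω + N) xs + vabs xs + b := by
  rw [aveF, hA, sub_sub, sub_eq_zero] at hxs
  simp only [mulV_add_left, mulV_sub_left] at hxs ⊢
  rw [← sub_eq_zero, ← sub_eq_zero_of_eq hxs]
  abel

lemma norm_mulV_sub_le_of_inexact_step (hA : A = M - N) (hxs : aveF A b xs = 0) {θ : ℝ}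
    (hθ : 0 ≤ θ) {y y' : EuclideanSpace ℝ (Fin n)}
    (hstep : ‖mulV (Ω + M) y' - (mulV (Ω + N) y + vabs y + b)‖ ≤ θ * ‖aveF A b y‖) :
    ‖mulV (Ω + M) (y' - xs)‖ ≤
      (θ * (spec (Ω + M) + spec (Ω + N) + 1) + spec (Ω + N) + 1) * ‖y - xs‖ := by
  set r := mulV (Ω + M) y' - (mulV (Ω + N) y + vabs y + b) with hr
  have hdecomp : mulV (Ω + M) (y' - xs) = r + mulV (Ω + N) (y - xs) + (vabs y - vabs xs) := by
    rw [hr, mulV_sub_right, mulV_sub_right, mulV_add_eq_of_aveF_eq_zero hA hxs]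
    abel
  have hres : ‖aveF A b y‖ ≤ (spec (Ω + M) + spec (Ω + N) + 1) * ‖y - xs‖ := by
    refine (norm_aveF_le hxs y).trans ?_
    have hsplit : A = (Ω + M) - (Ω + N) := by rw [hA]; abel
    gcongr
    exact hsplit ▸ spec_sub_le _ _
  calc ‖mulV (Ω + M) (y' - xs)‖
      ≤ ‖r‖ + ‖mulV (Ω + N) (y - xs)‖ + ‖vabs y - vabs xs‖ :=
        hdecomp ▸ norm_add₃_le
    _ ≤ θ * ((spec (Ω + M) + spec (Ω + N) + 1) * ‖y - xs‖) + spec (Ω + N) * ‖y - xs‖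
          + ‖y - xs‖ := by
        gcongr
        · exact hstep.trans (by gcongr)
        · exact norm_mulV_le _ _
        · exact norm_vabs_sub_vabs_le _ _
    _ = _ := by ring

lemma norm_le_spec_inv_mul (hM : IsUnit M) (Ω : Matrix (Fin n) (Fin n) ℝ)
    (v : EuclideanSpace ℝ (Fin n)) :
    ‖v‖ ≤ spec M⁻¹ * (‖mulV (Ω + M) v‖ + spec Ω * ‖v‖) :=
  calc ‖v‖ = ‖mulV M⁻¹ (mulV (Ω + M) v - mulV Ω v)‖ := by
        simp [mulV_nonsing_inv_mulV hM]
    _ ≤ spec M⁻¹ * ‖mulV (Ω + M) v - mulV Ω v‖ := norm_mulV_le _ _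
    _ ≤ spec M⁻¹ * (‖mulV (Ω + M) v‖ + spec Ω * ‖v‖) := by
        gcongr
        · exact spec_nonneg _
        · exact (norm_sub_le _ _).trans (by gcongr; exact norm_mulV_le _ _)

end AbsoluteValueEquation

theorem stmt10_general {n : ℕ} (A M N Ω : Matrix (Fin n) (Fin n) ℝ)
    (b : EuclideanSpace ℝ (Fin n)) (hA : A = M - N) (hM : IsUnit M) (θ : ℝ)
    (hθ0 : 0 ≤ θ)
    (xs : EuclideanSpace ℝ (Fin n)) (hxs : aveF A b xs = 0)
    (hcond : spec M⁻¹ <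
      1 / (θ * (spec (Ω + M) + spec (Ω + N) + 1) + spec (Ω + N) + spec Ω + 1))
    (x : ℕ → EuclideanSpace ℝ (Fin n))
    (hx : ∀ k : ℕ, ‖mulV (Ω + M) (x (k + 1)) - (mulV (Ω + N) (x k) + vabs (x k) + b)‖ ≤
      θ * ‖aveF A b (x k)‖) :
    ConvergesLinearlyTo x xs := by
  set α := θ * (spec (Ω + M) + spec (Ω + N) + 1) + spec (Ω + N) + 1
  have hα : 1 ≤ α := by
    have := spec_nonneg (Ω + M); have := spec_nonneg (Ω + N); simp only [α]; nlinarith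
  have hsmall : spec M⁻¹ * (α + spec Ω) < 1 := by
    have hpos : 0 < α + spec Ω := by linarith [spec_nonneg Ω]
    have hden : θ * (spec (Ω + M) + spec (Ω + N) + 1) + spec (Ω + N) + spec Ω + 1 = α + spec Ω := by
      ring
    rwa [hden, lt_div_iff₀ hpos] at hcond
  have hms : spec M⁻¹ * spec Ω < 1 := by nlinarith [spec_nonneg M⁻¹]
  obtain ⟨hc0, hc1⟩ := mul_div_one_sub_mul_mem_Ico (spec_nonneg _) (by linarith) hsmall
  refine ConvergesLinearlyTo.of_norm_sub_le_mul hc0 hc1 fun k => le_div_mul_of_le_mul_add hms ?_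
  refine (norm_le_spec_inv_mul hM Ω _).trans ?_
  gcongr
  · exact spec_nonneg _
  · exact norm_mulV_sub_le_of_inexact_step hA hxs hθ0 (hx k)

theorem stmt10 {n : ℕ} (A M N Ω : Matrix (Fin n) (Fin n) ℝ)
    (b : EuclideanSpace ℝ (Fin n)) (hA : A = M - N) (hM : IsUnit M) (θ : ℝ)
    (hθ0 : 0 ≤ θ) (hθ1 : θ < 1) (hinv : IsUnit (Ω + M))
    (xs : EuclideanSpace ℝ (Fin n)) (hxs : aveF A b xs = 0)
    (hcond : spec M⁻¹ <
      1 / (θ * (spec (Ω + M) + spec (Ω + N) + 1) + spec (Ω + N) + spec Ω + 1))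
    (x : ℕ → EuclideanSpace ℝ (Fin n))
    (hx : ∀ k : ℕ, ‖mulV (Ω + M) (x (k + 1)) - (mulV (Ω + N) (x k) + vabs (x k) + b)‖ ≤
      θ * ‖aveF A b (x k)‖) :
    ConvergesLinearlyTo x xs :=
  stmt10_general A M N Ω b hA hM θ hθ0 xs hxs hcond x hx
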